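/- arXiv:2007.15056 — 2 statements merged into one kernel-verified Lean document; each statement's English description precedes it below -/
import Mathlib

section
/- Let ā ≥ a̲ > 0, r > 0, and 0 < b < a̲/ā. Define h(τ) = [b ā - (a̲ - τ)(1 + r τ)]·[b + r (a̲ - τ)(1 + r τ)] - b³ τ. Then h has exactly one zero in the interval [0, a̲]. -/
/-!
Existence is the intermediate value theorem: `h 0 < 0 ≤ h a̲`. For uniqueness we show that `h` is
positive to the right of each of its zeros `x`. Writing `h y - h x = (y - x) D(x, y)`, the sign of
`D` is controlled by two inequalities valid at a zero: one coming from `b ā < a̲`, and the bound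
`b² (1 + r x) ≤ b + r (a̲ - x) (1 + r x)`, which comes from `ā ≥ a̲` and the concavity of the
zero condition in the quantity `r (a̲ - x) (1 + r x)`.
-/

open Set

theorem existsUnique_zero_of_pos_right {f : ℝ → ℝ} {a b : ℝ} (hab : a ≤ b)
    (hf : ContinuousOn f (Icc a b)) (ha : f a ≤ 0) (hb : 0 ≤ f b)
    (hpos : ∀ x ∈ Icc a b, f x = 0 → ∀ y ∈ Ioc x b, 0 < f y) :
    ∃! x, x ∈ Icc a b ∧ f x = 0 := by
  obtain ⟨x, hx, hfx⟩ := intermediate_value_Icc hab hf ⟨ha, hb⟩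
  refine ⟨x, ⟨hx, hfx⟩, fun y ⟨hy, hfy⟩ => le_antisymm ?_ ?_⟩
  · exact not_lt.mp fun hxy => (hpos x hx hfx y ⟨hxy, hy.2⟩).ne' hfy
  · exact not_lt.mp fun hyx => (hpos y hy hfy x ⟨hyx, hx.2⟩).ne' hfx

/-- `r * h τ = normalizedH b (r b ā) (r a̲) (r τ)`: rescaling `τ` by `r` removes the parameter `r`. -/
def normalizedH (b c p X : ℝ) : ℝ :=
  (c - (p - X) * (1 + X)) * (b + (p - X) * (1 + X)) - b ^ 3 * X

section normalizedH

variable {b c p : ℝ}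

theorem normalizedH_zero_neg (hb : 0 < b) (hp : 0 < p) (hcp : c < p) :
    normalizedH b c p 0 < 0 := by
  unfold normalizedH
  nlinarith

theorem normalizedH_self_nonneg (hb : 0 < b) (hbc : b * p ≤ c) (hcp : c < p) :
    0 ≤ normalizedH b c p p := by
  unfold normalizedH
  nlinarith [mul_pos hb hb]

theorem normalizedH_sub_normalizedH (x y : ℝ) :
    normalizedH b c p y - normalizedH b c p x = (y - x) *
      ((1 - p + x + y) * (b - c + (p - x) * (1 + x) + (p - y) * (1 + y)) - b ^ 3) := by
  unfold normalizedH
  ring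

theorem cube_lt_of_normalizedH_eq_zero (hb : 0 < b) (hp : 0 < p) (hcp : c < p)
    {x : ℝ} (hx : x ∈ Icc 0 p) (hx0 : normalizedH b c p x = 0) :
    b ^ 3 < (1 - (p - x)) * (b + (p - x) * (1 + x)) := by
  have hxpos : 0 < x := lt_of_le_of_ne hx.1 fun h => by
    subst h; exact (normalizedH_zero_neg hb hp hcp).ne hx0
  have hv : 0 < b + (p - x) * (1 + x) := by nlinarith [hx.2]
  unfold normalizedH at hx0
  have : b ^ 3 * x < x * ((1 - (p - x)) * (b + (p - x) * (1 + x))) := by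
    nlinarith [mul_lt_mul_of_pos_right hcp hv]
  nlinarith

-- The right side is concave in `t` and exceeds the left side at both ends of `[0, b² (1 + x) - b]`.
theorem cube_mul_lt_of_add_lt_sq_mul {b t x : ℝ} (hb : 0 < b) (hb1 : b < 1) (ht : 0 ≤ t)
    (hlt : b + t < b ^ 2 * (1 + x)) :
    b ^ 3 * x * (1 + x) < (b + t) * (b * x * (1 + x) - t * (1 + x - b)) := by
  have hx : 0 < x := by nlinarith
  have hinterp : (b ^ 2 * (1 + x) - b) *
      ((b + t) * (b * x * (1 + x) - t * (1 + x - b)) - b ^ 3 * x * (1 + x)) =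
      b ^ 2 * x * (1 + x) * (1 - b) * (b ^ 2 * (1 + x) - b - t)
      + b ^ 3 * (1 + x) * (1 - b) * (x ^ 2 + (1 - b) * (1 + x)) * t
      + (1 + x - b) * (b ^ 2 * (1 + x) - b) * t * (b ^ 2 * (1 + x) - b - t) := by ring
  have hS : 0 < b ^ 2 * (1 + x) - b - t := by linarith
  have hS' : 0 < b ^ 2 * (1 + x) - b := by linarith
  have h1b : 0 < 1 - b := by linarith
  have hXb : 0 < 1 + x - b := by linarith
  have : 0 < (b ^ 2 * (1 + x) - b) *
      ((b + t) * (b * x * (1 + x) - t * (1 + x - b)) - b ^ 3 * x * (1 + x)) := by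
    rw [hinterp]
    positivity
  nlinarith

theorem sq_mul_le_of_normalizedH_eq_zero (hb : 0 < b) (hp : 0 < p) (hbc : b * p ≤ c)
    (hcp : c < p) {x : ℝ} (hx : x ∈ Icc 0 p) (hx0 : normalizedH b c p x = 0) :
    b ^ 2 * (1 + x) ≤ b + (p - x) * (1 + x) := by
  obtain ⟨t, ht⟩ : ∃ t, t = (p - x) * (1 + x) := ⟨_, rfl⟩
  rw [← ht]
  by_contra! hlt
  have ht0 : 0 ≤ t := ht ▸ mul_nonneg (by linarith [hx.2]) (by linarith [hx.1])
  have hpX : p * (1 + x) = x * (1 + x) + t := by rw [ht]; ring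
  have hzero : (c - t) * (b + t) = b ^ 3 * x := by
    unfold normalizedH at hx0; rw [← ht] at hx0; linarith
  have hsign : (b + t) * (b * x * (1 + x) - t * (1 + x - b)) - b ^ 3 * x * (1 + x) =
      (1 + x) * (b + t) * (b * p - c) := by
    linear_combination (-(b * (b + t))) * hpX + (1 + x) * hzero
  have := cube_mul_lt_of_add_lt_sq_mul hb (by nlinarith) ht0 hlt
  nlinarith [mul_nonneg (by linarith [hx.1] : (0 : ℝ) ≤ 1 + x) (by linarith : 0 ≤ b + t)]

theorem normalizedH_pos_of_eq_zero (hb : 0 < b) (hp : 0 < p) (hbc : b * p ≤ c) (hcp : c < p)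
    {x : ℝ} (hx : x ∈ Icc 0 p) (hx0 : normalizedH b c p x = 0) {y : ℝ} (hy : y ∈ Ioc x p) :
    0 < normalizedH b c p y := by
  have hcube := cube_lt_of_normalizedH_eq_zero hb hp hcp hx hx0
  have hsq := sq_mul_le_of_normalizedH_eq_zero hb hp hbc hcp hx hx0
  have hv0 : 0 < b + (p - x) * (1 + x) := by nlinarith [hx.1, hx.2]
  have hvy : b ≤ b + (p - y) * (1 + y) := by nlinarith [hx.1, hy.1, hy.2]
  have hy0 : 0 < y := hx.1.trans_lt hy.1
  have hid : (b + (p - x) * (1 + x)) * normalizedH b c p y = (y - x) *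
      ((b + (p - y) * (1 + y)) * ((1 - (p - x) + y) * (b + (p - x) * (1 + x)) - b ^ 3)
        - b ^ 3 * y * (1 - (p - x) + y)) := by
    have := normalizedH_sub_normalizedH (b := b) (c := c) (p := p) x y
    unfold normalizedH at hx0 this ⊢
    linear_combination (b + (p - x) * (1 + x)) * this
      + (b + (p - x) * (1 + x) - (y - x) * (1 - (p - x) + y)) * hx0
  have hE : 1 - (p - x) + y ≤ 1 + x := by linarith [hy.2]
  generalize b + (p - x) * (1 + x) = v at hcube hsq hv0 hid
  have h1s : 0 < 1 - (p - x) := by nlinarith [pow_pos hb 3]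
  generalize hEdef : 1 - (p - x) + y = E at hid hE
  have hE0 : 0 < E := by linarith
  have hEv : b ^ 2 * y * E < E * v - b ^ 3 := by
    have : b ^ 2 * E ≤ v := le_trans (by nlinarith) hsq
    nlinarith
  have : 0 < (b + (p - y) * (1 + y)) * (E * v - b ^ 3) - b ^ 3 * y * E := by
    nlinarith [mul_le_mul_of_nonneg_right hvy (by positivity : 0 ≤ b ^ 2 * y * E)]
  exact pos_of_mul_pos_right (hid ▸ mul_pos (sub_pos.mpr hy.1) this) hv0.le

end normalizedH

theorem stmt4 (abar alow b r : ℝ) (ha : 0 < alow) (haa : alow ≤ abar)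
    (hr : 0 < r) (hb : 0 < b) (hba : b < alow / abar)
    (h : ℝ → ℝ)
    (hh : h = fun τ => (b * abar - (alow - τ) * (1 + r * τ)) *
      (b + r * (alow - τ) * (1 + r * τ)) - b ^ 3 * τ) :
    ∃! τ : ℝ, τ ∈ Set.Icc (0:ℝ) alow ∧ h τ = 0 := by
  have hscale (τ : ℝ) : r * h τ = normalizedH b (r * b * abar) (r * alow) (r * τ) := by
    subst hh; unfold normalizedH; ring
  have hp : 0 < r * alow := mul_pos hr ha
  have hbc : b * (r * alow) ≤ r * b * abar := by
    nlinarith [mul_le_mul_of_nonneg_left haa (mul_pos hr hb).le]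
  have hcp : r * b * abar < r * alow := by
    nlinarith [(lt_div_iff₀ (ha.trans_le haa)).mp hba]
  refine existsUnique_zero_of_pos_right ha.le (by subst hh; fun_prop) ?_ ?_ ?_
  · have h0 := hscale 0
    rw [mul_zero] at h0
    nlinarith [normalizedH_zero_neg hb hp hcp]
  · nlinarith [hscale alow, normalizedH_self_nonneg hb hbc hcp]
  · intro x hx hx0 y hy
    have hrx : r * x ∈ Icc 0 (r * alow) :=
      ⟨mul_nonneg hr.le hx.1, mul_le_mul_of_nonneg_left hx.2 hr.le⟩
    have hry : r * y ∈ Ioc (r * x) (r * alow) :=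
      ⟨mul_lt_mul_of_pos_left hy.1 hr, mul_le_mul_of_nonneg_left hy.2 hr.le⟩
    have hpos := normalizedH_pos_of_eq_zero hb hp hbc hcp hrx
      (by rw [← hscale, hx0, mul_zero]) hry
    rw [← hscale] at hpos
    exact pos_of_mul_pos_right hpos hr.le
end

section
/- Let ā ≥ a̲ > 0, r ≥ 0, 0 < b < a̲/ā, and let (u̲_∞, ū_∞) be the unique pair with 0 < u̲_∞ ≤ ū_∞ solving (ā - ū_∞)(1 + r ū_∞) = b u̲_∞ and (a̲ - u̲_∞)(1 + r u̲_∞) = b ū_∞. Then as b → 0⁺ (with ā, a̲, r fixed), u̲_∞ → a̲ and ū_∞ → ā; consequently (1 + 2r u̲_∞ - r a̲)(u̲_∞/ū_∞)^{5/2} → (1 + r a̲)(a̲/ā)^{5/2} > 0, so the stability condition b < (1 + 2r u̲_∞ - r a̲)·(u̲_∞/ū_∞)^{5/2} holds for all sufficiently small b > 0 (when d₁, d₂ are constants). -/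
/-!
From `(a - u)(1 + r u) = b v` with all quantities nonnegative one reads off
`0 ≤ a - u ≤ b v`, so both components of the quasi-steady state are pinched between
their limits and a perturbation of size `b ā`. The stability factor is continuous at
the limit, where it is positive, while `b → 0`.
-/

open Filter Topology

lemma sub_le_and_le_of_sub_mul_one_add_eq {a u r c : ℝ} (hr : 0 ≤ r) (hu : 0 ≤ u)
    (hc : 0 ≤ c) (h : (a - u) * (1 + r * u) = c) : a - c ≤ u ∧ u ≤ a := by
  have hru : 0 ≤ r * u := mul_nonneg hr hu
  have hau : 0 ≤ a - u := nonneg_of_mul_nonneg_left (h ▸ hc) (by linarith)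
  constructor <;> nlinarith [mul_nonneg hau hru]

lemma tendsto_nhdsWithin_zero_of_sub_mul_le {s : Set ℝ} {f : ℝ → ℝ} {a M : ℝ}
    (h : ∀ᶠ x in 𝓝[s] 0, a - x * M ≤ f x ∧ f x ≤ a) : Tendsto f (𝓝[s] 0) (𝓝 a) := by
  have hlow : Tendsto (fun x : ℝ => a - x * M) (𝓝[s] 0) (𝓝 a) := by
    have : Tendsto (fun x : ℝ => a - x * M) (𝓝 0) (𝓝 (a - 0 * M)) :=
      (continuous_const.sub (continuous_id.mul continuous_const)).tendsto 0
    simpa using this.mono_left nhdsWithin_le_nhds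
  exact tendsto_of_tendsto_of_tendsto_of_le_of_le' hlow tendsto_const_nhds
    (h.mono fun _ hx => hx.1) (h.mono fun _ hx => hx.2)

lemma tendsto_stability_factor {α : Type*} {l : Filter α} {f g : α → ℝ} {a c r p : ℝ}
    (hf : Tendsto f l (𝓝 a)) (hg : Tendsto g l (𝓝 c)) (hc : c ≠ 0) (hp : 0 < p) :
    Tendsto (fun x => (1 + 2 * r * f x - r * a) * (f x / g x) ^ p) l
      (𝓝 ((1 + r * a) * (a / c) ^ p)) := by
  have hcoef : Tendsto (fun x => 1 + 2 * r * f x - r * a) l (𝓝 (1 + r * a)) := by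
    have : Tendsto (fun x => 1 + 2 * r * f x - r * a) l (𝓝 (1 + 2 * r * a - r * a)) :=
      (tendsto_const_nhds.add (tendsto_const_nhds.mul hf)).sub tendsto_const_nhds
    rwa [show 1 + 2 * r * a - r * a = 1 + r * a by ring] at this
  exact hcoef.mul ((hf.div hg hc).rpow_const (Or.inr hp.le))

lemma eventually_lt_of_tendsto_nhdsWithin {s : Set ℝ} {g : ℝ → ℝ} {x₀ L : ℝ}
    (hg : Tendsto g (𝓝[s] x₀) (𝓝 L)) (hL : x₀ < L) : ∀ᶠ x in 𝓝[s] x₀, x < g x := by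
  have hdiff : Tendsto (fun x => g x - x) (𝓝[s] x₀) (𝓝 (L - x₀)) :=
    hg.sub (tendsto_nhdsWithin_of_tendsto_nhds tendsto_id)
  filter_upwards [hdiff.eventually (eventually_gt_nhds (sub_pos.2 hL))] with x hx
  linarith

theorem stmt17 (abar alow r : ℝ) (ha : 0 < alow) (haa : alow ≤ abar) (hr : 0 ≤ r)
    (ul uu : ℝ → ℝ)
    (hsol : ∀ b ∈ Set.Ioo (0:ℝ) (alow / abar),
      0 < ul b ∧ ul b ≤ uu b ∧
      (abar - uu b) * (1 + r * uu b) = b * ul b ∧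
      (alow - ul b) * (1 + r * ul b) = b * uu b) :
    Filter.Tendsto ul (nhdsWithin 0 (Set.Ioi 0)) (nhds alow) ∧
    Filter.Tendsto uu (nhdsWithin 0 (Set.Ioi 0)) (nhds abar) ∧
    Filter.Tendsto
      (fun b => (1 + 2 * r * ul b - r * alow) * (ul b / uu b) ^ ((5:ℝ)/2))
      (nhdsWithin 0 (Set.Ioi 0))
      (nhds ((1 + r * alow) * (alow / abar) ^ ((5:ℝ)/2))) ∧
    0 < (1 + r * alow) * (alow / abar) ^ ((5:ℝ)/2) ∧
    ∀ᶠ b in nhdsWithin 0 (Set.Ioi 0),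
      b < (1 + 2 * r * ul b - r * alow) * (ul b / uu b) ^ ((5:ℝ)/2) := by
  have habar : 0 < abar := ha.trans_le haa
  have hbounds : ∀ᶠ b in 𝓝[>] 0, (alow - b * abar ≤ ul b ∧ ul b ≤ alow) ∧
      (abar - b * abar ≤ uu b ∧ uu b ≤ abar) := by
    filter_upwards [Ioo_mem_nhdsGT (div_pos ha habar)] with b hb
    obtain ⟨hul, hle, huu_eq, hul_eq⟩ := hsol b hb
    have hb0 : 0 ≤ b := hb.1.le
    have hupper := sub_le_and_le_of_sub_mul_one_add_eq hr hul.le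
      (mul_nonneg hb0 (hul.trans_le hle).le) hul_eq
    have hlower := sub_le_and_le_of_sub_mul_one_add_eq hr (hul.trans_le hle).le
      (mul_nonneg hb0 hul.le) huu_eq
    have : b * uu b ≤ b * abar := mul_le_mul_of_nonneg_left hlower.2 hb0
    have : b * ul b ≤ b * abar := mul_le_mul_of_nonneg_left (hupper.2.trans haa) hb0
    exact ⟨⟨by linarith, hupper.2⟩, ⟨by linarith, hlower.2⟩⟩
  have hul := tendsto_nhdsWithin_zero_of_sub_mul_le (hbounds.mono fun _ h => h.1)
  have huu := tendsto_nhdsWithin_zero_of_sub_mul_le (hbounds.mono fun _ h => h.2)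
  have hlim := tendsto_stability_factor (r := r) hul huu habar.ne' (by norm_num : (0:ℝ) < 5 / 2)
  have hpos : 0 < (1 + r * alow) * (alow / abar) ^ ((5:ℝ)/2) := by positivity
  exact ⟨hul, huu, hlim, hpos, eventually_lt_of_tendsto_nhdsWithin hlim hpos⟩
end
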